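/- Let U be a nonempty finite set and let A, B ⊆ U be nonempty subsets. If π is chosen uniformly at random from the set of all permutations (bijections U → U composed with a fixed linear order, equivalently uniformly random linear orderings of U), then the probability that the minimum of π over A equals the minimum of π over B is exactly |A ∩ B| / |A ∪ B|, the Jaccard similarity of A and B. Equivalently, the number of permutations π of U with min_{a ∈ A} π(a) = min_{b ∈ B} π(b), divided by |U|!, equals |A ∩ B| / |A ∪ B|. -/
import Mathlib

open Finset

namespace MinhashAux

variable {U : Type*} [Fintype U] [DecidableEq U]

/-- Minimal value of `π` over `C`. -/
noncomputable def mval (C : Finset U) (hC : C.Nonempty) (π : U ≃ Fin (Fintype.card U)) :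
    Fin (Fintype.card U) :=
  (C.image (fun a => π a)).min' (hC.image _)

/-- The element of `C` achieving the minimum. -/
noncomputable def amin (C : Finset U) (hC : C.Nonempty) (π : U ≃ Fin (Fintype.card U)) : U :=
  π.symm (mval C hC π)

theorem mval_mem (C : Finset U) (hC : C.Nonempty) (π : U ≃ Fin (Fintype.card U)) :
    mval C hC π ∈ C.image (fun a => π a) :=
  Finset.min'_mem _ _

theorem amin_mem (C : Finset U) (hC : C.Nonempty) (π : U ≃ Fin (Fintype.card U)) :
    amin C hC π ∈ C := by
  obtain ⟨c, hc, hcv⟩ := Finset.mem_image.1 (mval_mem C hC π)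
  have : amin C hC π = c := by rw [amin, ← hcv, Equiv.symm_apply_apply]
  rwa [this]

theorem apply_amin (C : Finset U) (hC : C.Nonempty) (π : U ≃ Fin (Fintype.card U)) :
    π (amin C hC π) = mval C hC π := by
  rw [amin, Equiv.apply_symm_apply]

theorem mval_le (C : Finset U) (hC : C.Nonempty) (π : U ≃ Fin (Fintype.card U))
    {c : U} (hc : c ∈ C) : mval C hC π ≤ π c :=
  Finset.min'_le _ _ (Finset.mem_image_of_mem _ hc)

theorem amin_trans (C : Finset U) (hC : C.Nonempty) {x y : U} (hx : x ∈ C) (hy : y ∈ C)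
    (π : U ≃ Fin (Fintype.card U)) :
    amin C hC ((Equiv.swap x y).trans π) = Equiv.swap x y (amin C hC π) := by
  have hswapC : ∀ a, a ∈ C → Equiv.swap x y a ∈ C := by
    intro a ha
    rcases eq_or_ne a x with rfl | hax
    · simpa [Equiv.swap_apply_left] using hy
    rcases eq_or_ne a y with rfl | hay
    · simpa [Equiv.swap_apply_right] using hx
    · rwa [Equiv.swap_apply_of_ne_of_ne hax hay]
  have hmval : mval C hC ((Equiv.swap x y).trans π) = mval C hC π := by
    apply le_antisymm
    · have h1 : ((Equiv.swap x y).trans π) (Equiv.swap x y (amin C hC π)) = mval C hC π := by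
        simp [Equiv.trans_apply, Equiv.swap_apply_self, apply_amin]
      calc mval C hC ((Equiv.swap x y).trans π)
          ≤ ((Equiv.swap x y).trans π) (Equiv.swap x y (amin C hC π)) :=
            mval_le _ _ _ (hswapC _ (amin_mem C hC π))
        _ = mval C hC π := h1
    · have h2 : π (Equiv.swap x y (amin C hC ((Equiv.swap x y).trans π)))
          = mval C hC ((Equiv.swap x y).trans π) := by
        have := apply_amin C hC ((Equiv.swap x y).trans π)
        simpa [Equiv.trans_apply] using this
      calc mval C hC π
          ≤ π (Equiv.swap x y (amin C hC ((Equiv.swap x y).trans π))) :=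
            mval_le _ _ _ (hswapC _ (amin_mem C hC _))
        _ = mval C hC ((Equiv.swap x y).trans π) := h2
  rw [amin, amin, hmval]
  simp [Equiv.symm_trans_apply]

end MinhashAux

open MinhashAux in
/-- **MinHash collision probability.** Let `U` be a nonempty finite set, `A, B ⊆ U`
nonempty. Identify a uniformly random linear ordering of `U` with a bijection
`π : U ≃ Fin |U|`; the MinHash value of a nonempty `S ⊆ U` is `min_{s ∈ S} π s`.
Then the number of such `π` with `min_{a ∈ A} π a = min_{b ∈ B} π b`, divided by
`|U|!`, equals the Jaccard similarity `|A ∩ B| / |A ∪ B|`. -/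
theorem minhash_collision_probability {U : Type*} [Fintype U] [DecidableEq U]
    [Nonempty U] (A B : Finset U) (hA : A.Nonempty) (hB : B.Nonempty) :
    ((Finset.univ.filter (fun π : U ≃ Fin (Fintype.card U) =>
        (A.image (fun a => π a)).min' (hA.image _) =
        (B.image (fun b => π b)).min' (hB.image _))).card : ℝ) /
      (Nat.factorial (Fintype.card U)) =
    ((A ∩ B).card : ℝ) / (A ∪ B).card := by
  classical
  set C : Finset U := A ∪ B with hCdef
  have hC : C.Nonempty := hA.mono Finset.subset_union_left
  -- key equivalence: collision iff argmin lies in A ∩ B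
  have key : ∀ π : U ≃ Fin (Fintype.card U),
      ((A.image (fun a => π a)).min' (hA.image _) =
        (B.image (fun b => π b)).min' (hB.image _)) ↔ amin C hC π ∈ A ∩ B := by
    intro π
    have hmA : mval C hC π ≤ (A.image (fun a => π a)).min' (hA.image _) := by
      obtain ⟨a, ha, hav⟩ := Finset.mem_image.1 (Finset.min'_mem (A.image (fun a => π a))
        (hA.image _))
      rw [← hav]
      exact mval_le C hC π (Finset.mem_union_left _ ha)
    have hmB : mval C hC π ≤ (B.image (fun b => π b)).min' (hB.image _) := by
      obtain ⟨b, hb, hbv⟩ := Finset.mem_image.1 (Finset.min'_mem (B.image (fun b => π b))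
        (hB.image _))
      rw [← hbv]
      exact mval_le C hC π (Finset.mem_union_right _ hb)
    constructor
    · intro h
      -- min over C is attained in A.image or B.image
      have hmem : mval C hC π ∈ A.image (fun a => π a) ∪ B.image (fun a => π a) := by
        have := mval_mem C hC π
        simpa [hCdef, Finset.image_union] using this
      rw [Finset.mem_union] at hmem
      have hAeq : (A.image (fun a => π a)).min' (hA.image _) = mval C hC π := by
        rcases hmem with hm | hm
        · exact le_antisymm (Finset.min'_le _ _ hm) hmA
        · rw [h]; exact le_antisymm (Finset.min'_le _ _ hm) hmB
      have hBeq : (B.image (fun b => π b)).min' (hB.image _) = mval C hC π := by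
        rw [← h]; exact hAeq
      have hAm : mval C hC π ∈ A.image (fun a => π a) := hAeq ▸ Finset.min'_mem _ _
      have hBm : mval C hC π ∈ B.image (fun b => π b) := hBeq ▸ Finset.min'_mem _ _
      obtain ⟨a, ha, hav⟩ := Finset.mem_image.1 hAm
      obtain ⟨b, hb, hbv⟩ := Finset.mem_image.1 hBm
      have haa : amin C hC π = a := by rw [amin, ← hav, Equiv.symm_apply_apply]
      have hbb : amin C hC π = b := by rw [amin, ← hbv, Equiv.symm_apply_apply]
      exact Finset.mem_inter.2 ⟨haa ▸ ha, hbb ▸ hb⟩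
    · intro h
      have hin := Finset.mem_inter.1 h
      have hπ : π (amin C hC π) = mval C hC π := apply_amin C hC π
      have h1 : (A.image (fun a => π a)).min' (hA.image _) = mval C hC π :=
        le_antisymm (by rw [← hπ]; exact Finset.min'_le _ _ (Finset.mem_image_of_mem _ hin.1))
          hmA
      have h2 : (B.image (fun b => π b)).min' (hB.image _) = mval C hC π :=
        le_antisymm (by rw [← hπ]; exact Finset.min'_le _ _ (Finset.mem_image_of_mem _ hin.2))
          hmB
      rw [h1, h2]
  -- all fibers of amin over C have equal cardinality (swap symmetry)
  have hfib : ∀ x ∈ C, ∀ y ∈ C,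
      (Finset.univ.filter fun π : U ≃ Fin (Fintype.card U) => amin C hC π = x).card =
      (Finset.univ.filter fun π : U ≃ Fin (Fintype.card U) => amin C hC π = y).card := by
    intro x hx y hy
    apply Finset.card_bij' (fun π _ => (Equiv.swap x y).trans π)
      (fun π _ => (Equiv.swap x y).trans π)
    · intro π hπ
      simp only [Finset.mem_filter, Finset.mem_univ, true_and] at hπ ⊢
      rw [amin_trans C hC hx hy, hπ, Equiv.swap_apply_left]
    · intro π hπ
      simp only [Finset.mem_filter, Finset.mem_univ, true_and] at hπ ⊢
      rw [amin_trans C hC hx hy, hπ, Equiv.swap_apply_right]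
    · intro π _
      ext u
      simp [Equiv.swap_apply_self]
    · intro π _
      ext u
      simp [Equiv.swap_apply_self]
  set k := (Finset.univ.filter
    fun π : U ≃ Fin (Fintype.card U) => amin C hC π = hC.choose).card with hk
  have hfibk : ∀ x ∈ C,
      (Finset.univ.filter fun π : U ≃ Fin (Fintype.card U) => amin C hC π = x).card = k :=
    fun x hx => hfib x hx _ hC.choose_spec
  have hcount1 : (Finset.univ.filter (fun π : U ≃ Fin (Fintype.card U) =>
      (A.image (fun a => π a)).min' (hA.image _) =
      (B.image (fun b => π b)).min' (hB.image _))).card = (A ∩ B).card * k := by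
    rw [Finset.card_eq_sum_card_fiberwise (f := amin C hC) (t := A ∩ B)
      (fun π hπ => (key π).1 (Finset.mem_filter.1 hπ).2)]
    rw [Finset.sum_congr rfl (fun x hx => ?_), Finset.sum_const, smul_eq_mul]
    rw [Finset.filter_filter]
    rw [show (Finset.univ.filter fun π : U ≃ Fin (Fintype.card U) =>
        ((A.image (fun a => π a)).min' (hA.image _) =
          (B.image (fun b => π b)).min' (hB.image _)) ∧ amin C hC π = x) =
        Finset.univ.filter fun π : U ≃ Fin (Fintype.card U) => amin C hC π = x from ?_]
    · exact hfibk x ((Finset.inter_subset_left.trans Finset.subset_union_left) hx)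
    · apply Finset.filter_congr
      intro π _
      constructor
      · exact fun h => h.2
      · exact fun h => ⟨(key π).2 (h ▸ hx), h⟩
  have hcount2 : (Finset.univ : Finset (U ≃ Fin (Fintype.card U))).card = C.card * k := by
    rw [Finset.card_eq_sum_card_fiberwise (f := amin C hC) (t := C)
      (fun π _ => amin_mem C hC π)]
    rw [Finset.sum_congr rfl (fun x hx => hfibk x hx), Finset.sum_const, smul_eq_mul]
  have hfact : Nat.factorial (Fintype.card U) = C.card * k := by
    rw [← hcount2, Finset.card_univ, Fintype.card_equiv (Fintype.equivFin U)]
  have hCpos : 0 < C.card := Finset.card_pos.2 hC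
  have hkpos : 0 < k := by
    rcases Nat.eq_zero_or_pos k with h0 | h
    · exfalso
      have := Nat.factorial_pos (Fintype.card U)
      rw [hfact, h0, Nat.mul_zero] at this
      exact Nat.lt_irrefl 0 this
    · exact h
  rw [hcount1, hfact, hCdef] at *
  push_cast
  rw [mul_comm ((A ∪ B).card : ℝ) (k : ℝ), mul_comm (((A ∩ B).card : ℝ)) (k : ℝ),
    mul_div_mul_left _ _ (by exact_mod_cast hkpos.ne' : (k : ℝ) ≠ 0)]
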